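/- arXiv:2201.05986 — 2 statements merged into one kernel-verified Lean document; each statement's English description precedes it below -/
import Mathlib

section
/- Let E be a real normed vector space, n ≥ 1, and M ≥ 0. For j = 1, 2, let T₁ʲ, …, Tₙʲ : E → E be continuous linear maps with operator norm ‖Tᵢʲ‖ ≤ M for all i, and let g₁, …, gₙ : E → E be maps that are each 1-Lipschitz and norm-nonincreasing. For an input x ∈ E, define yᵢʲ recursively by y₀ʲ = x and yᵢʲ = gᵢ(Tᵢʲ(yᵢ₋₁ʲ)). Then ‖yₙ¹ − yₙ²‖ ≤ M^{n−1} · ‖x‖ · Σ_{i=1}^{n} ‖Tᵢ¹ − Tᵢ²‖, where ‖Tᵢ¹ − Tᵢ²‖ is the operator norm of the difference. -/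
/-- The layered network with linear layers `T i` and activations `g i`, `i = 1, …, n`,
applied to an input `x`: `y 0 = x` and `y i = g i (T i (y (i-1)))`. -/
def layeredNet {E : Type*} [NormedAddCommGroup E] [NormedSpace ℝ E]
    (T : ℕ → E →L[ℝ] E) (g : ℕ → E → E) (x : E) : ℕ → E
  | 0 => x
  | i + 1 => g (i + 1) (T (i + 1) (layeredNet T g x i))

lemma layeredNet_norm_le {E : Type*} [NormedAddCommGroup E] [NormedSpace ℝ E]
    (M : ℝ) (hM : 0 ≤ M) (T : ℕ → E →L[ℝ] E) (g : ℕ → E → E) (x : E) :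
    ∀ k : ℕ, (∀ i ∈ Finset.Icc 1 k, ‖T i‖ ≤ M) →
      (∀ i ∈ Finset.Icc 1 k, ∀ u : E, ‖g i u‖ ≤ ‖u‖) →
      ‖layeredNet T g x k‖ ≤ M ^ k * ‖x‖ := by
  intro k
  induction k with
  | zero => intro _ _; simp [layeredNet]
  | succ k ih =>
    intro hT hg
    have hk1 : k + 1 ∈ Finset.Icc 1 (k + 1) := by simp
    have hsub : ∀ i ∈ Finset.Icc 1 k, i ∈ Finset.Icc 1 (k + 1) := by
      intro i hi; simp at hi ⊢; omega
    have ih' := ih (fun i hi => hT i (hsub i hi)) (fun i hi => hg i (hsub i hi))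
    calc ‖layeredNet T g x (k + 1)‖
        = ‖g (k + 1) (T (k + 1) (layeredNet T g x k))‖ := rfl
      _ ≤ ‖T (k + 1) (layeredNet T g x k)‖ := hg _ hk1 _
      _ ≤ ‖T (k + 1)‖ * ‖layeredNet T g x k‖ := (T (k + 1)).le_opNorm _
      _ ≤ M * (M ^ k * ‖x‖) := by
          apply mul_le_mul (hT _ hk1) ih' (norm_nonneg _) hM
      _ = M ^ (k + 1) * ‖x‖ := by ring

/-- If `T i ^j : E → E`, `i = 1, …, n`, `j = 1, 2`, are continuous linear maps with operator
norms bounded by `M`, and `g i : E → E` are 1-Lipschitz and norm-nonincreasing, then the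
outputs of the two layered networks satisfy
`‖yₙ¹ − yₙ²‖ ≤ M^(n−1) * ‖x‖ * ∑ᵢ ‖Tᵢ¹ − Tᵢ²‖`. -/
theorem layeredNet_dist_le {E : Type*} [NormedAddCommGroup E] [NormedSpace ℝ E]
    (n : ℕ) (hn : 1 ≤ n) (M : ℝ) (hM : 0 ≤ M)
    (T₁ T₂ : ℕ → E →L[ℝ] E) (g : ℕ → E → E)
    (hT₁ : ∀ i ∈ Finset.Icc 1 n, ‖T₁ i‖ ≤ M)
    (hT₂ : ∀ i ∈ Finset.Icc 1 n, ‖T₂ i‖ ≤ M)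
    (hgLip : ∀ i ∈ Finset.Icc 1 n, ∀ u v : E, ‖g i u - g i v‖ ≤ ‖u - v‖)
    (hgNorm : ∀ i ∈ Finset.Icc 1 n, ∀ u : E, ‖g i u‖ ≤ ‖u‖)
    (x : E) :
    ‖layeredNet T₁ g x n - layeredNet T₂ g x n‖ ≤
      M ^ (n - 1) * ‖x‖ * ∑ i ∈ Finset.Icc 1 n, ‖T₁ i - T₂ i‖ := by
  induction n, hn using Nat.le_induction with
  | base =>
    simp only [Finset.Icc_self, Finset.sum_singleton, Nat.sub_self, pow_zero, one_mul]
    calc ‖layeredNet T₁ g x 1 - layeredNet T₂ g x 1‖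
        = ‖g 1 (T₁ 1 x) - g 1 (T₂ 1 x)‖ := rfl
      _ ≤ ‖T₁ 1 x - T₂ 1 x‖ := hgLip 1 (by simp) _ _
      _ = ‖(T₁ 1 - T₂ 1) x‖ := by simp
      _ ≤ ‖T₁ 1 - T₂ 1‖ * ‖x‖ := (T₁ 1 - T₂ 1).le_opNorm _
      _ = ‖x‖ * ‖T₁ 1 - T₂ 1‖ := by ring
  | succ n hn ih =>
    have hsub : ∀ i ∈ Finset.Icc 1 n, i ∈ Finset.Icc 1 (n + 1) := by
      intro i hi; simp at hi ⊢; omega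
    have hn1 : n + 1 ∈ Finset.Icc 1 (n + 1) := by simp
    have ih' := ih (fun i hi => hT₁ i (hsub i hi)) (fun i hi => hT₂ i (hsub i hi))
      (fun i hi => hgLip i (hsub i hi)) (fun i hi => hgNorm i (hsub i hi))
    have hy1 : ‖layeredNet T₁ g x n‖ ≤ M ^ n * ‖x‖ :=
      layeredNet_norm_le M hM T₁ g x n (fun i hi => hT₁ i (hsub i hi))
        (fun i hi => hgNorm i (hsub i hi))
    have hsum : ∑ i ∈ Finset.Icc 1 (n + 1), ‖T₁ i - T₂ i‖
        = (∑ i ∈ Finset.Icc 1 n, ‖T₁ i - T₂ i‖) + ‖T₁ (n + 1) - T₂ (n + 1)‖ :=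
      Finset.sum_Icc_succ_top (by omega) _
    have hsumnn : (0:ℝ) ≤ ∑ i ∈ Finset.Icc 1 n, ‖T₁ i - T₂ i‖ :=
      Finset.sum_nonneg fun i _ => norm_nonneg _
    have hpow : M * M ^ (n - 1) = M ^ n := by
      rw [← pow_succ']; congr 1; omega
    calc ‖layeredNet T₁ g x (n + 1) - layeredNet T₂ g x (n + 1)‖
        = ‖g (n + 1) (T₁ (n + 1) (layeredNet T₁ g x n))
            - g (n + 1) (T₂ (n + 1) (layeredNet T₂ g x n))‖ := rfl
      _ ≤ ‖T₁ (n + 1) (layeredNet T₁ g x n) - T₂ (n + 1) (layeredNet T₂ g x n)‖ :=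
          hgLip _ hn1 _ _
      _ ≤ ‖T₁ (n + 1) (layeredNet T₁ g x n) - T₂ (n + 1) (layeredNet T₁ g x n)‖
            + ‖T₂ (n + 1) (layeredNet T₁ g x n) - T₂ (n + 1) (layeredNet T₂ g x n)‖ :=
          norm_sub_le_norm_sub_add_norm_sub _ _ _
      _ ≤ ‖T₁ (n + 1) - T₂ (n + 1)‖ * ‖layeredNet T₁ g x n‖
            + ‖T₂ (n + 1)‖ * ‖layeredNet T₁ g x n - layeredNet T₂ g x n‖ := by
          gcongr
          · exact (T₁ (n + 1) - T₂ (n + 1)).le_opNorm _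
          · rw [← map_sub]; exact (T₂ (n + 1)).le_opNorm _
      _ ≤ ‖T₁ (n + 1) - T₂ (n + 1)‖ * (M ^ n * ‖x‖)
            + M * (M ^ (n - 1) * ‖x‖ * ∑ i ∈ Finset.Icc 1 n, ‖T₁ i - T₂ i‖) := by
          gcongr
          exact hT₂ _ hn1
      _ = M ^ n * ‖x‖ * (∑ i ∈ Finset.Icc 1 n, ‖T₁ i - T₂ i‖ + ‖T₁ (n + 1) - T₂ (n + 1)‖) := by
          rw [← hpow]; ring
      _ = M ^ (n + 1 - 1) * ‖x‖ * ∑ i ∈ Finset.Icc 1 (n + 1), ‖T₁ i - T₂ i‖ := by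
          rw [hsum]; norm_num
end

section
/- Let E and F be real normed vector spaces, let μ be a measure on E with ∫ ‖x‖² dμ(x) < ∞, and fix v ∈ F. For j = 1, 2, let G_j : E → F and D_j : E → F be measurable maps, and suppose there are constants Δ₁, Δ₂, C₁, C₂ ≥ 0 such that for all x ∈ E: ‖G₁(x) − G₂(x)‖ ≤ Δ₁‖x‖, ‖G₂(x)‖ ≤ C₁‖x‖, ‖D₁(x) − D₂(x)‖ ≤ Δ₂‖x‖, and ‖v − D₂(x)‖ ≤ C₂‖x‖. Define L_j = ∫ ‖G_j(x)‖² dμ(x) + ∫ ‖v − D_j(x)‖² dμ(x), assuming all four integrands are integrable. Then |L₁ − L₂| ≤ (2C₁Δ₁ + Δ₁² + 2C₂Δ₂ + Δ₂²) · ∫ ‖x‖² dμ(x). -/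
open MeasureTheory


lemma sq_norm_diff_aux {F : Type*} [NormedAddCommGroup F] (a b : F) (Δ C t : ℝ)
    (h1 : ‖a - b‖ ≤ Δ * t) (h2 : ‖b‖ ≤ C * t) :
    |‖a‖ ^ 2 - ‖b‖ ^ 2| ≤ (2 * C * Δ + Δ ^ 2) * t ^ 2 := by
  have ha : ‖a‖ ≤ ‖b‖ + ‖a - b‖ := by
    have := norm_add_le (a - b) b; simpa [add_comm] using this
  have hb : ‖b‖ ≤ ‖a‖ + ‖a - b‖ := by
    have := norm_sub_le a (a - b); simpa using this
  have h0 : (0:ℝ) ≤ ‖a - b‖ := norm_nonneg _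
  have h0b : (0:ℝ) ≤ ‖b‖ := norm_nonneg _
  have h0a : (0:ℝ) ≤ ‖a‖ := norm_nonneg _
  rw [abs_le]
  constructor <;> nlinarith [sq_nonneg (‖a - b‖), sq_nonneg (‖a‖ - ‖b‖)]

/-- Bound on the change of the LSGAN-style adversarial loss: if for `j = 1, 2` the maps
`G_j, D_j : E → F` satisfy the pointwise bounds `‖G₁ x − G₂ x‖ ≤ Δ₁‖x‖`, `‖G₂ x‖ ≤ C₁‖x‖`,
`‖D₁ x − D₂ x‖ ≤ Δ₂‖x‖`, `‖v − D₂ x‖ ≤ C₂‖x‖`, then the losses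
`L_j = ∫ ‖G_j x‖² dμ + ∫ ‖v − D_j x‖² dμ` satisfy
`|L₁ − L₂| ≤ (2C₁Δ₁ + Δ₁² + 2C₂Δ₂ + Δ₂²) ∫ ‖x‖² dμ`. -/
theorem adversarial_loss_diff_le {E F : Type*}
    [NormedAddCommGroup E] [NormedSpace ℝ E] [MeasurableSpace E]
    [NormedAddCommGroup F] [NormedSpace ℝ F] [MeasurableSpace F]
    (μ : Measure E) (hx2 : Integrable (fun x => ‖x‖ ^ 2) μ)
    (v : F) (G₁ G₂ D₁ D₂ : E → F)
    (hG₁m : Measurable G₁) (hG₂m : Measurable G₂)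
    (hD₁m : Measurable D₁) (hD₂m : Measurable D₂)
    (Δ₁ Δ₂ C₁ C₂ : ℝ) (hΔ₁ : 0 ≤ Δ₁) (hΔ₂ : 0 ≤ Δ₂) (hC₁ : 0 ≤ C₁) (hC₂ : 0 ≤ C₂)
    (hG : ∀ x : E, ‖G₁ x - G₂ x‖ ≤ Δ₁ * ‖x‖)
    (hG₂ : ∀ x : E, ‖G₂ x‖ ≤ C₁ * ‖x‖)
    (hD : ∀ x : E, ‖D₁ x - D₂ x‖ ≤ Δ₂ * ‖x‖)
    (hD₂' : ∀ x : E, ‖v - D₂ x‖ ≤ C₂ * ‖x‖)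
    (hiG₁ : Integrable (fun x => ‖G₁ x‖ ^ 2) μ)
    (hiG₂ : Integrable (fun x => ‖G₂ x‖ ^ 2) μ)
    (hiD₁ : Integrable (fun x => ‖v - D₁ x‖ ^ 2) μ)
    (hiD₂ : Integrable (fun x => ‖v - D₂ x‖ ^ 2) μ) :
    |((∫ x, ‖G₁ x‖ ^ 2 ∂μ) + ∫ x, ‖v - D₁ x‖ ^ 2 ∂μ) -
        ((∫ x, ‖G₂ x‖ ^ 2 ∂μ) + ∫ x, ‖v - D₂ x‖ ^ 2 ∂μ)| ≤
      (2 * C₁ * Δ₁ + Δ₁ ^ 2 + 2 * C₂ * Δ₂ + Δ₂ ^ 2) * ∫ x, ‖x‖ ^ 2 ∂μ := by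
  have key : ∀ x : E,
      |(‖G₁ x‖ ^ 2 + ‖v - D₁ x‖ ^ 2) - (‖G₂ x‖ ^ 2 + ‖v - D₂ x‖ ^ 2)| ≤
        (2 * C₁ * Δ₁ + Δ₁ ^ 2 + 2 * C₂ * Δ₂ + Δ₂ ^ 2) * ‖x‖ ^ 2 := by
    intro x
    have k1 := sq_norm_diff_aux (G₁ x) (G₂ x) Δ₁ C₁ ‖x‖ (hG x) (hG₂ x)
    have k2 := sq_norm_diff_aux (v - D₁ x) (v - D₂ x) Δ₂ C₂ ‖x‖ (by
      have : (v - D₁ x) - (v - D₂ x) = -(D₁ x - D₂ x) := by abel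
      rw [this, norm_neg]; exact hD x) (hD₂' x)
    calc |(‖G₁ x‖ ^ 2 + ‖v - D₁ x‖ ^ 2) - (‖G₂ x‖ ^ 2 + ‖v - D₂ x‖ ^ 2)|
        ≤ |‖G₁ x‖ ^ 2 - ‖G₂ x‖ ^ 2| + |‖v - D₁ x‖ ^ 2 - ‖v - D₂ x‖ ^ 2| := by
          have : (‖G₁ x‖ ^ 2 + ‖v - D₁ x‖ ^ 2) - (‖G₂ x‖ ^ 2 + ‖v - D₂ x‖ ^ 2)
              = (‖G₁ x‖ ^ 2 - ‖G₂ x‖ ^ 2) + (‖v - D₁ x‖ ^ 2 - ‖v - D₂ x‖ ^ 2) := by ring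
          rw [this]; exact abs_add_le _ _
      _ ≤ (2 * C₁ * Δ₁ + Δ₁ ^ 2) * ‖x‖ ^ 2 + (2 * C₂ * Δ₂ + Δ₂ ^ 2) * ‖x‖ ^ 2 :=
          add_le_add k1 k2
      _ = (2 * C₁ * Δ₁ + Δ₁ ^ 2 + 2 * C₂ * Δ₂ + Δ₂ ^ 2) * ‖x‖ ^ 2 := by ring
  have hint : Integrable (fun x =>
      (‖G₁ x‖ ^ 2 + ‖v - D₁ x‖ ^ 2) - (‖G₂ x‖ ^ 2 + ‖v - D₂ x‖ ^ 2)) μ :=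
    (hiG₁.add hiD₁).sub (hiG₂.add hiD₂)
  have heq := integral_sub (hiG₁.add hiD₁) (hiG₂.add hiD₂)
  simp only [Pi.add_apply] at heq
  rw [integral_add hiG₁ hiD₁, integral_add hiG₂ hiD₂] at heq
  rw [← heq]
  calc |∫ x, ((‖G₁ x‖ ^ 2 + ‖v - D₁ x‖ ^ 2) - (‖G₂ x‖ ^ 2 + ‖v - D₂ x‖ ^ 2)) ∂μ|
      ≤ ∫ x, |(‖G₁ x‖ ^ 2 + ‖v - D₁ x‖ ^ 2) - (‖G₂ x‖ ^ 2 + ‖v - D₂ x‖ ^ 2)| ∂μ :=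
        (by simpa [Real.norm_eq_abs] using norm_integral_le_integral_norm (μ := μ) (fun x => (‖G₁ x‖ ^ 2 + ‖v - D₁ x‖ ^ 2) - (‖G₂ x‖ ^ 2 + ‖v - D₂ x‖ ^ 2)))
    _ ≤ ∫ x, (2 * C₁ * Δ₁ + Δ₁ ^ 2 + 2 * C₂ * Δ₂ + Δ₂ ^ 2) * ‖x‖ ^ 2 ∂μ :=
        integral_mono hint.abs (hx2.const_mul _) key
    _ = (2 * C₁ * Δ₁ + Δ₁ ^ 2 + 2 * C₂ * Δ₂ + Δ₂ ^ 2) * ∫ x, ‖x‖ ^ 2 ∂μ :=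
        MeasureTheory.integral_const_mul _ _
end
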